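/- Consider the generalized gadget network on vertices s, v₁, …, v_{2n}, t with: a spine path s→v₁→⋯→v_{2n}→t of arcs with flow value 4; arcs of value 2 from s to v₁, v₃, …, v_{2n−1} and from v₂, v₄, …, v_{2n} to t; and two parallel arcs of value 1 from v_{2i−1} to v_{2i} for each i. The greedy decomposition that first extracts the value-4 spine path yields 2n + 1 path flows, while there exists a decomposition into n + 3 path flows; hence the gap between greedy and optimal is at least n − 2 and can be arbitrarily large. -/

import Mathlib

/-!
The flow is the sum of the spine path with value 2, the two zigzag paths (the even spine arcs
together with one arc of every parallel pair) with value 1, and the `n` paths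
`s → v_{2i+1} → v_{2i+2} → t` through an odd spine arc with value 2: `n + 3` path flows.

Once the spine path is extracted with value 4 the spine carries no flow, so every path of a
decomposition of the remainder has the form `s → v_{2i+1} → v_{2i+2} → t` through a parallel
arc. Each path therefore meets at most one of the `2n` parallel arcs, all of which carry flow,
so at least `2n` paths are needed; the `2n` such paths with value 1 suffice.
-/

/-- A multidigraph: a set of arcs `E` over vertices `V`, with source and destination maps. -/
structure MultiDigraph (V E : Type) where
  src : E → V
  dst : E → V

namespace MultiDigraph

variable {V E : Type}

/-- `p` is a directed walk from `u` to `v` (as a list of consecutive arcs). -/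
def IsWalk (D : MultiDigraph V E) : V → V → List E → Prop
  | u, v, [] => u = v
  | u, v, e :: p => D.src e = u ∧ D.IsWalk (D.dst e) v p

/-- A directed path from `u` to `v`: a walk without repeated arcs. -/
def IsPath (D : MultiDigraph V E) (u v : V) (p : List E) : Prop :=
  D.IsWalk u v p ∧ p.Nodup

/-- A directed cycle: a nonempty closed walk without repeated arcs. -/
def IsCycle (D : MultiDigraph V E) (p : List E) : Prop :=
  p ≠ [] ∧ p.Nodup ∧ ∃ u, D.IsWalk u u p

/-- The flow sending value `r` along each arc of `p` and `0` elsewhere. -/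
def pathFlow [DecidableEq E] (p : List E) (r : ℝ) : E → ℝ :=
  fun e => if e ∈ p then r else 0

variable [Fintype E] [DecidableEq V]

/-- Net flow out of a vertex `v` (outflow minus inflow), i.e. the balance `b_x(v)`. -/
def excess (D : MultiDigraph V E) (x : E → ℝ) (v : V) : ℝ :=
  (∑ e : E, if D.src e = v then x e else 0) - (∑ e : E, if D.dst e = v then x e else 0)

/-- An `(s,t)`-flow: nonnegative and conserved at every vertex other than `s` and `t`. -/
def IsSTFlow (D : MultiDigraph V E) (s t : V) (x : E → ℝ) : Prop :=
  (∀ e, 0 ≤ x e) ∧ ∀ v, v ≠ s → v ≠ t → D.excess x v = 0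

/-- `x` respects the capacity function `u`. -/
def IsFlowUnder (D : MultiDigraph V E) (u x : E → ℝ) : Prop :=
  ∀ e, 0 ≤ x e ∧ x e ≤ u e

/-- `x` is a maximum `(s,t)`-flow with respect to capacities `u`. -/
def IsMaxFlow (D : MultiDigraph V E) (u : E → ℝ) (s t : V) (x : E → ℝ) : Prop :=
  D.IsFlowUnder u x ∧ D.IsSTFlow s t x ∧
    ∀ y, D.IsFlowUnder u y → D.IsSTFlow s t y → D.excess y s ≤ D.excess x s

/-- A circulation: a (finite) sum of cycle flows. -/
def IsCirculation [DecidableEq E] (D : MultiDigraph V E) (c : E → ℝ) : Prop :=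
  ∃ (n : ℕ) (C : Fin n → List E) (r : Fin n → ℝ),
    (∀ i, D.IsCycle (C i) ∧ 0 < r i) ∧ c = ∑ i, pathFlow (C i) (r i)

/-- `x` decomposes into exactly `k` `(s,t)`-path flows. -/
def Splittable [DecidableEq E] (D : MultiDigraph V E) (s t : V) (x : E → ℝ) (k : ℕ) : Prop :=
  ∃ (P : Fin k → List E) (r : Fin k → ℝ),
    (∀ i, D.IsPath s t (P i) ∧ 0 < r i) ∧ x = ∑ i, pathFlow (P i) (r i)

/-- `x` decomposes into exactly `k` `(s,t)`-path flows, plus possibly a circulation. -/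
def SplittableC [DecidableEq E] (D : MultiDigraph V E) (s t : V) (x : E → ℝ) (k : ℕ) : Prop :=
  ∃ (P : Fin k → List E) (r : Fin k → ℝ) (c : E → ℝ),
    D.IsCirculation c ∧ (∀ i, D.IsPath s t (P i) ∧ 0 < r i) ∧
    x = c + ∑ i, pathFlow (P i) (r i)

/-- The cost of a path: its number of distinct colours. -/
def pathCost {C : Type} [DecidableEq C] (col : E → C) (p : List E) : ℕ :=
  (p.map col).toFinset.card

/-- `x` admits a decomposition into `(s,t)`-path flows (plus possibly a circulation,
which does not affect the cost) whose total colour-cost is `K`. -/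
def DecompCost [DecidableEq E] {C : Type} [DecidableEq C] (D : MultiDigraph V E)
    (col : E → C) (s t : V) (x : E → ℝ) (K : ℕ) : Prop :=
  ∃ (k : ℕ) (P : Fin k → List E) (r : Fin k → ℝ) (c : E → ℝ),
    D.IsCirculation c ∧ (∀ i, D.IsPath s t (P i) ∧ 0 < r i) ∧
    x = c + ∑ i, pathFlow (P i) (r i) ∧ ∑ i, pathCost col (P i) = K

/-- `x` admits a decomposition into `(s,t)`-path flows (only) of total colour-cost `K`. -/
def DecompCostPure [DecidableEq E] {C : Type} [DecidableEq C] (D : MultiDigraph V E)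
    (col : E → C) (s t : V) (x : E → ℝ) (K : ℕ) : Prop :=
  ∃ (k : ℕ) (P : Fin k → List E) (r : Fin k → ℝ),
    (∀ i, D.IsPath s t (P i) ∧ 0 < r i) ∧
    x = ∑ i, pathFlow (P i) (r i) ∧ ∑ i, pathCost col (P i) = K

end MultiDigraph

open MultiDigraph

/-- Arcs of the generalized gadget network on `s, v₁, …, v_{2n}, t`:
a spine of `2n+1` arcs (flow value 4); value-2 arcs `s → v_{2i+1}` and `v_{2i+2} → t`
(`0 ≤ i < n`); and two parallel value-1 arcs `v_{2i+1} → v_{2i+2}`. -/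
inductive GArc (n : ℕ) where
  | spine (k : Fin (2 * n + 1))
  | src2 (i : Fin n)
  | snk2 (i : Fin n)
  | par (i : Fin n) (b : Bool)
deriving DecidableEq, Fintype

/-- The gadget network, with vertices encoded as naturals: `s = 0`, `vᵢ = i`,
`t = 2n + 1`. -/
def gadgetNet (n : ℕ) : MultiDigraph ℕ (GArc n) where
  src := fun e => match e with
    | .spine k => (k : ℕ)
    | .src2 _ => 0
    | .snk2 i => 2 * (i : ℕ) + 2
    | .par i _ => 2 * (i : ℕ) + 1
  dst := fun e => match e with
    | .spine k => (k : ℕ) + 1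
    | .src2 i => 2 * (i : ℕ) + 1
    | .snk2 _ => 2 * n + 1
    | .par i _ => 2 * (i : ℕ) + 2

/-- The flow on the gadget network: 4 on the spine, 2 on the side arcs, 1 on the
parallel arcs. -/
def gadgetFlow (n : ℕ) : GArc n → ℝ := fun e => match e with
  | .spine _ => 4
  | .src2 _ => 2
  | .snk2 _ => 2
  | .par _ _ => 1

/-- The spine `(s,t)`-path of value-4 arcs. -/
def spinePath (n : ℕ) : List (GArc n) := (List.finRange (2 * n + 1)).map GArc.spine

namespace MultiDigraph

variable {V E : Type} {D : MultiDigraph V E}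

theorem isWalk_ofFn (w : ℕ → V) {m : ℕ} (f : Fin m → E)
    (hsrc : ∀ j, D.src (f j) = w j) (hdst : ∀ j, D.dst (f j) = w (j + 1)) :
    D.IsWalk (w 0) (w m) (List.ofFn f) := by
  induction m generalizing w with
  | zero => rfl
  | succ m ih =>
    rw [List.ofFn_succ]
    refine ⟨hsrc 0, ?_⟩
    simpa [hdst 0] using ih (fun j => w (j + 1)) (fun j => f j.succ)
      (fun j => by simpa using hsrc j.succ) (fun j => by simpa using hdst j.succ)

theorem eq_nil_of_isWalk_of_forall_src_ne {u v : V} {p : List E}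
    (hu : ∀ e, D.src e ≠ u) (hp : D.IsWalk u v p) : p = [] := by
  cases p with
  | nil => rfl
  | cons e p => exact absurd hp.1 (hu e)

variable [DecidableEq E] {s t : V}

theorem Splittable.zero : D.Splittable s t 0 0 :=
  ⟨Fin.elim0, Fin.elim0, fun i => i.elim0, by simp⟩

theorem Splittable.single {p : List E} {r : ℝ} (hp : D.IsPath s t p) (hr : 0 < r) :
    D.Splittable s t (pathFlow p r) 1 :=
  ⟨fun _ => p, fun _ => r, fun _ => ⟨hp, hr⟩, by simp⟩

theorem Splittable.add {x y : E → ℝ} {k l : ℕ} (hx : D.Splittable s t x k)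
    (hy : D.Splittable s t y l) : D.Splittable s t (x + y) (k + l) := by
  obtain ⟨P, r, hP, rfl⟩ := hx
  obtain ⟨Q, q, hQ, rfl⟩ := hy
  refine ⟨Fin.append P Q, Fin.append r q, fun i => ?_, by simp [Fin.sum_univ_add]⟩
  refine Fin.addCases (fun i => ?_) (fun i => ?_) i <;> simp [hP, hQ]

theorem Splittable.sum {m : ℕ} {x : Fin m → E → ℝ} {k : ℕ}
    (hx : ∀ i, D.Splittable s t (x i) k) : D.Splittable s t (∑ i, x i) (m * k) := by
  induction m with
  | zero => simpa using Splittable.zero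
  | succ m ih =>
    rw [Fin.sum_univ_castSucc, Nat.succ_mul]
    exact (ih fun i => hx i.castSucc).add (hx (Fin.last m))

theorem notMem_of_sum_pathFlow_eq_zero {k : ℕ} {P : Fin k → List E} {r : Fin k → ℝ}
    (hr : ∀ i, 0 < r i) {e : E} (he : (∑ i, pathFlow (P i) (r i)) e = 0) (i : Fin k) :
    e ∉ P i := by
  intro hmem
  rw [Finset.sum_apply] at he
  have hnonneg : ∀ j ∈ Finset.univ, 0 ≤ pathFlow (P j) (r j) e := fun j _ => by
    unfold pathFlow; split_ifs <;> simp [(hr j).le]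
  have := (Finset.sum_eq_zero_iff_of_nonneg hnonneg).1 he i (Finset.mem_univ i)
  simp [pathFlow, hmem] at this
  exact (hr i).ne' this

theorem exists_mem_of_sum_pathFlow_ne_zero {k : ℕ} {P : Fin k → List E} {r : Fin k → ℝ}
    {e : E} (he : (∑ i, pathFlow (P i) (r i)) e ≠ 0) : ∃ i, e ∈ P i := by
  by_contra! h
  rw [Finset.sum_apply] at he
  exact he (Finset.sum_eq_zero fun i _ => by simp [pathFlow, h i])

theorem Splittable.card_le {x : E → ℝ} {k : ℕ} (hx : D.Splittable s t x k)
    {ι : Type} [Fintype ι] (g : ι → E) (hg : ∀ i, x (g i) ≠ 0)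
    (hsupp : ∀ p, D.IsPath s t p → (∀ e ∈ p, x e ≠ 0) →
      ∀ i j, g i ∈ p → g j ∈ p → i = j) :
    Fintype.card ι ≤ k := by
  obtain ⟨P, r, hP, rfl⟩ := hx
  choose f hf using fun i => exists_mem_of_sum_pathFlow_ne_zero (hg i)
  suffices f.Injective by simpa using Fintype.card_le_of_injective f this
  intro i j hij
  refine hsupp (P (f i)) (hP (f i)).1 (fun e he hzero => ?_) i j (hf i) (hij ▸ hf j)
  exact notMem_of_sum_pathFlow_eq_zero (fun i => (hP i).2) hzero _ he

end MultiDigraph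

open GArc

variable {n : ℕ}

def zigzagArc (n : ℕ) (b : Bool) (j : Fin (2 * n + 1)) : GArc n :=
  if h : (j : ℕ) % 2 = 0 then spine j else par ⟨j / 2, by omega⟩ b

def zigzagPath (n : ℕ) (b : Bool) : List (GArc n) := List.ofFn (zigzagArc n b)

def oddSpinePath (i : Fin n) : List (GArc n) := [src2 i, spine ⟨2 * i + 1, by omega⟩, snk2 i]

def parPath (i : Fin n) (b : Bool) : List (GArc n) := [src2 i, par i b, snk2 i]

@[simp]
theorem spine_mem_spinePath (k : Fin (2 * n + 1)) : spine k ∈ spinePath n := by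
  simp [spinePath]

theorem isPath_spinePath : (gadgetNet n).IsPath 0 (2 * n + 1) (spinePath n) := by
  rw [spinePath, ← List.ofFn_eq_map]
  exact ⟨isWalk_ofFn id _ (fun _ => rfl) (fun _ => rfl),
    List.nodup_ofFn.2 fun _ _ h => spine.inj h⟩

theorem zigzagArc_injective (b : Bool) : (zigzagArc n b).Injective := by
  intro j k h
  unfold zigzagArc at h
  split_ifs at h with hj hk hk <;> simp only [spine.injEq, par.injEq, Fin.ext_iff] at h
  all_goals first | exact h | (ext; omega)

theorem isPath_zigzagPath (b : Bool) : (gadgetNet n).IsPath 0 (2 * n + 1) (zigzagPath n b) := by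
  refine ⟨isWalk_ofFn id _ (fun j => ?_) (fun j => ?_),
    List.nodup_ofFn.2 (zigzagArc_injective b)⟩ <;>
  · unfold zigzagArc; split_ifs <;> simp only [gadgetNet, id]; omega

theorem isPath_oddSpinePath (i : Fin n) : (gadgetNet n).IsPath 0 (2 * n + 1) (oddSpinePath i) :=
  ⟨⟨rfl, rfl, rfl, rfl⟩, by simp [oddSpinePath]⟩

theorem isPath_parPath (i : Fin n) (b : Bool) :
    (gadgetNet n).IsPath 0 (2 * n + 1) (parPath i b) :=
  ⟨⟨rfl, rfl, rfl, rfl⟩, by simp [parPath]⟩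

@[simp]
theorem spine_mem_zigzagPath (b : Bool) (k : Fin (2 * n + 1)) :
    spine k ∈ zigzagPath n b ↔ (k : ℕ) % 2 = 0 := by
  simp only [zigzagPath, List.mem_ofFn, zigzagArc]
  constructor
  · rintro ⟨j, hj⟩
    split_ifs at hj with h
    cases hj
    exact h
  · intro h
    exact ⟨k, by simp [h]⟩

@[simp]
theorem par_mem_zigzagPath (b b' : Bool) (i : Fin n) :
    par i b' ∈ zigzagPath n b ↔ b' = b := by
  simp only [zigzagPath, List.mem_ofFn, zigzagArc]
  constructor
  · rintro ⟨j, hj⟩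
    split_ifs at hj
    exact (par.inj hj).2.symm
  · rintro rfl
    refine ⟨⟨2 * i + 1, by omega⟩, ?_⟩
    simp only [dif_neg (show ¬ (2 * (i : ℕ) + 1) % 2 = 0 by omega)]
    congr
    omega

@[simp]
theorem src2_notMem_zigzagPath (b : Bool) (i : Fin n) : src2 i ∉ zigzagPath n b := by
  simp only [zigzagPath, List.mem_ofFn, zigzagArc]
  rintro ⟨j, hj⟩
  split_ifs at hj

@[simp]
theorem snk2_notMem_zigzagPath (b : Bool) (i : Fin n) : snk2 i ∉ zigzagPath n b := by
  simp only [zigzagPath, List.mem_ofFn, zigzagArc]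
  rintro ⟨j, hj⟩
  split_ifs at hj

theorem sum_pathFlow_oddSpinePath_spine (r : ℝ) (k : Fin (2 * n + 1)) :
    ∑ i, pathFlow (oddSpinePath i) r (spine k) = if (k : ℕ) % 2 = 0 then 0 else r := by
  simp only [pathFlow, oddSpinePath, List.mem_cons, spine.injEq, reduceCtorEq, false_or,
    Fin.ext_iff, List.not_mem_nil, or_false]
  split_ifs with hk
  · exact Finset.sum_eq_zero fun i _ => if_neg (by omega)
  · have hk' : (k : ℕ) / 2 < n := by omega
    rw [Finset.sum_eq_single_of_mem ⟨k / 2, hk'⟩ (Finset.mem_univ _)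
      fun i _ hi => if_neg fun h => hi (Fin.ext (by simp only; omega))]
    exact if_pos (by simp only; omega)

theorem gadgetFlow_eq_sum :
    gadgetFlow n = ∑ i, pathFlow (oddSpinePath i) 2 + pathFlow (spinePath n) 2 +
      pathFlow (zigzagPath n true) 1 + pathFlow (zigzagPath n false) 1 := by
  funext e
  cases e with
  | spine k =>
    simp only [Pi.add_apply, Finset.sum_apply, sum_pathFlow_oddSpinePath_spine]
    simp only [pathFlow, spine_mem_zigzagPath, spine_mem_spinePath, if_true]
    split_ifs <;> norm_num [gadgetFlow]
  | src2 i => simp [gadgetFlow, pathFlow, oddSpinePath, spinePath]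
  | snk2 i => simp [gadgetFlow, pathFlow, oddSpinePath, spinePath]
  | par i b => cases b <;> simp [gadgetFlow, pathFlow, oddSpinePath, spinePath]

theorem gadgetFlow_sub_spinePath :
    gadgetFlow n - pathFlow (spinePath n) 4 =
      ∑ i, (pathFlow (parPath i true) 1 + pathFlow (parPath i false) 1) := by
  funext e
  cases e with
  | spine k => simp [gadgetFlow, pathFlow, parPath, spinePath]
  | src2 i => simp [gadgetFlow, pathFlow, parPath, spinePath, Finset.sum_add_distrib]; norm_num
  | snk2 i => simp [gadgetFlow, pathFlow, parPath, spinePath, Finset.sum_add_distrib]; norm_num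
  | par i b => cases b <;> simp [gadgetFlow, pathFlow, parPath, spinePath]

theorem gadgetNet_src_ne_sink (e : GArc n) : (gadgetNet n).src e ≠ 2 * n + 1 := by
  cases e <;> simp only [gadgetNet] <;> omega

theorem eq_parPath_of_isWalk {p : List (GArc n)} (hp : (gadgetNet n).IsWalk 0 (2 * n + 1) p)
    (hspine : ∀ k, spine k ∉ p) : ∃ i b, p = parPath i b := by
  rcases p with _ | ⟨e₁, _ | ⟨e₂, _ | ⟨e₃, p⟩⟩⟩
  · simp [IsWalk] at hp
  all_goals
    obtain ⟨i, rfl⟩ : ∃ i, e₁ = src2 i := by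
      cases e₁ with
      | src2 i => exact ⟨i, rfl⟩
      | spine k => exact absurd List.mem_cons_self (hspine k)
      | _ => simp [IsWalk, gadgetNet] at hp
  · simp [IsWalk, gadgetNet] at hp
    omega
  all_goals
    obtain ⟨b, rfl⟩ : ∃ b, e₂ = par i b := by
      cases e₂ with
      | par j b => exact ⟨b, by simp [IsWalk, gadgetNet] at hp; simp [Fin.ext_iff]; omega⟩
      | spine k => exact absurd (by simp) (hspine k)
      | _ => simp [IsWalk, gadgetNet] at hp <;> omega
  · simp [IsWalk, gadgetNet] at hp
    omega
  obtain rfl : e₃ = snk2 i := by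
    cases e₃ with
    | snk2 j => simp [IsWalk, gadgetNet] at hp; simp [Fin.ext_iff]; omega
    | spine k => exact absurd (by simp) (hspine k)
    | _ => simp [IsWalk, gadgetNet] at hp <;> omega
  obtain rfl : p = [] := eq_nil_of_isWalk_of_forall_src_ne gadgetNet_src_ne_sink hp.2.2.2
  exact ⟨i, b, rfl⟩

theorem splittable_gadgetFlow : (gadgetNet n).Splittable 0 (2 * n + 1) (gadgetFlow n) (n + 3) := by
  have hodd : (gadgetNet n).Splittable 0 (2 * n + 1) (∑ i, pathFlow (oddSpinePath i) 2) n :=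
    ⟨oddSpinePath, fun _ => 2, fun i => ⟨isPath_oddSpinePath i, two_pos⟩, rfl⟩
  rw [gadgetFlow_eq_sum]
  exact ((hodd.add (.single isPath_spinePath two_pos)).add
    (.single (isPath_zigzagPath true) one_pos)).add (.single (isPath_zigzagPath false) one_pos)

theorem splittable_gadgetFlow_sub_spinePath :
    (gadgetNet n).Splittable 0 (2 * n + 1) (gadgetFlow n - pathFlow (spinePath n) 4) (2 * n) := by
  have hpair (i : Fin n) : (gadgetNet n).Splittable 0 (2 * n + 1)
      (pathFlow (parPath i true) 1 + pathFlow (parPath i false) 1) 2 :=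
    (Splittable.single (isPath_parPath i true) one_pos).add
      (.single (isPath_parPath i false) one_pos)
  rw [gadgetFlow_sub_spinePath]
  simpa only [mul_comm n 2] using Splittable.sum hpair

theorem two_mul_le_of_splittable_gadgetFlow_sub_spinePath {k : ℕ}
    (hk : (gadgetNet n).Splittable 0 (2 * n + 1) (gadgetFlow n - pathFlow (spinePath n) 4) k) :
    2 * n ≤ k := by
  have hspine (j) : (gadgetFlow n - pathFlow (spinePath n) 4) (spine j) = 0 := by
    simp [gadgetFlow, pathFlow]
  have hpar (i b) : (gadgetFlow n - pathFlow (spinePath n) 4) (par i b) = 1 := by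
    simp [gadgetFlow, pathFlow, spinePath]
  have := hk.card_le (fun ib : Fin n × Bool => par ib.1 ib.2) (fun ib => by simp [hpar])
    fun p hp hsupp ib ib' h h' => ?_
  · simpa [mul_comm] using this
  obtain ⟨i, b, rfl⟩ := eq_parPath_of_isWalk hp.1 fun j hj => hsupp _ hj (hspine j)
  simp only [parPath, List.mem_cons, par.injEq, reduceCtorEq, List.not_mem_nil, or_false,
    false_or] at h h'
  exact Prod.ext (h.1.trans h'.1.symm) (h.2.trans h'.2.symm)

theorem stmt11_general (n : ℕ) :
    (gadgetNet n).Splittable 0 (2 * n + 1) (gadgetFlow n) (n + 3) ∧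
    IsLeast {k : ℕ | (gadgetNet n).Splittable 0 (2 * n + 1)
      (gadgetFlow n - pathFlow (spinePath n) 4) k} (2 * n) :=
  ⟨splittable_gadgetFlow, splittable_gadgetFlow_sub_spinePath,
    fun _ => two_mul_le_of_splittable_gadgetFlow_sub_spinePath⟩

/-- On the generalized gadget network, the greedy decomposition extracting the
value-4 spine path first yields `2n + 1` path flows (the remainder needs exactly
`2n` paths), whereas the whole flow decomposes into `n + 3` path flows; so the gap
between greedy and optimal is `n − 2`, which is arbitrarily large. -/
theorem stmt11 (n : ℕ) (hn : 0 < n) :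
    (gadgetNet n).Splittable 0 (2 * n + 1) (gadgetFlow n) (n + 3) ∧
    IsLeast {k : ℕ | (gadgetNet n).Splittable 0 (2 * n + 1)
      (gadgetFlow n - pathFlow (spinePath n) 4) k} (2 * n) :=
  stmt11_general n
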